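/- Binomial-coefficient formula for truncated Cauchy–Carlitz numbers: for every integer N ≥ 0 and every n ≥ 1, CC_{N,n} = Π(n) Σ_{k=1}^{n} (n+1 choose k+1) (−L_N)^k Σ_{i_1,…,i_k ≥ 0, r^{N+i_1}+⋯+r^{N+i_k} = n + k r^N} (−1)^{i_1+⋯+i_k}/(L_{N+i_1} ⋯ L_{N+i_k}), where the inner sum is over all ordered k-tuples of nonnegative integers (i_1,…,i_k) with r^{N+i_1}+⋯+r^{N+i_k} = n + k r^N. -/

import Mathlib

/-!
Carlitz module: `Fq` is a finite field with `r = Fintype.card Fq` elements (so `r` is a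
power of a prime `p`), and `K = Fq(T)` is the field of rational functions over `Fq`.
-/

noncomputable section

variable (Fq : Type*) [Field Fq] [Fintype Fq]

/-- `r`, the number of elements of the finite field `Fq` (a prime power). -/
def rq : ℕ := Fintype.card Fq

/-- `[i] = T^{r^i} − T` in `K = Fq(T)`. -/
def carlitzBracket (i : ℕ) : RatFunc Fq := RatFunc.X ^ rq Fq ^ i - RatFunc.X

/-- `D_0 = 1`, `D_i = [i]·D_{i−1}^r`. -/
def carlitzD : ℕ → RatFunc Fq
  | 0 => 1
  | i + 1 => carlitzBracket Fq (i + 1) * carlitzD i ^ rq Fq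

/-- `L_0 = 1`, `L_i = [i]·L_{i−1}`. -/
def carlitzL : ℕ → RatFunc Fq
  | 0 => 1
  | i + 1 => carlitzBracket Fq (i + 1) * carlitzL i

/-- The Carlitz factorial `Π(i) = ∏_j D_j^{c_j}`, where `i = Σ_j c_j r^j` with
`0 ≤ c_j < r` is the base-`r` expansion of `i`. -/
def carlitzPi (i : ℕ) : RatFunc Fq :=
  ∏ j ∈ Finset.range (i + 1), carlitzD Fq j ^ (Nat.digits (rq Fq) i).getD j 0

/-- The power series `Σ_{j=0}^∞ (D_N/D_{N+j}) x^{r^{N+j} − r^N}`, i.e.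
`(e_C(x) − Σ_{i=0}^{N−1} x^{r^i}/D_i)·D_N/x^{r^N}`; it has constant term `1`. -/
def bcSeries (N : ℕ) : PowerSeries (RatFunc Fq) :=
  PowerSeries.mk fun m => ∑ j ∈ Finset.range (m + 1),
    if m = rq Fq ^ (N + j) - rq Fq ^ N then carlitzD Fq N / carlitzD Fq (N + j) else 0

/-- The truncated Bernoulli–Carlitz number `BC_{N,n}`: `BC_{N,n}/Π(n)` is the `n`-th
coefficient of the multiplicative inverse of the power series
`Σ_{j=0}^∞ (D_N/D_{N+j}) x^{r^{N+j} − r^N}`. -/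
def truncBC (N n : ℕ) : RatFunc Fq :=
  carlitzPi Fq n * PowerSeries.coeff n (bcSeries Fq N)⁻¹

/-- The power series `Σ_{j=0}^∞ (−1)^j (L_N/L_{N+j}) x^{r^{N+j} − r^N}`, i.e.
`(log_C(x) − Σ_{i=0}^{N−1} (−1)^i x^{r^i}/L_i)·(−1)^N L_N/x^{r^N}`;
it has constant term `1`. -/
def ccSeries (N : ℕ) : PowerSeries (RatFunc Fq) :=
  PowerSeries.mk fun m => ∑ j ∈ Finset.range (m + 1),
    if m = rq Fq ^ (N + j) - rq Fq ^ N then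
      (-1) ^ j * carlitzL Fq N / carlitzL Fq (N + j) else 0

/-- The truncated Cauchy–Carlitz number `CC_{N,n}`: `CC_{N,n}/Π(n)` is the `n`-th
coefficient of the multiplicative inverse of the power series
`Σ_{j=0}^∞ (−1)^j (L_N/L_{N+j}) x^{r^{N+j} − r^N}`. -/
def truncCC (N n : ℕ) : RatFunc Fq :=
  carlitzPi Fq n * PowerSeries.coeff n (ccSeries Fq N)⁻¹

/-- The tail `e_C(z) − 𝓔_{N−1}(z) = Σ_{i=N}^∞ z^{r^i}/D_i` of the Carlitz exponential. -/
def carlitzExpTail (N : ℕ) : PowerSeries (RatFunc Fq) :=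
  PowerSeries.mk fun m => ∑ j ∈ Finset.range (m + 1),
    if m = rq Fq ^ (N + j) then (carlitzD Fq (N + j))⁻¹ else 0

/-- The associated Stirling–Carlitz number of the second kind `{n brace k}_{C,≥N}`,
defined by `(e_C(z) − 𝓔_{N−1}(z))^k/Π(k) = Σ_n {n brace k}_{C,≥N} z^n/Π(n)`. -/
def stirling2C (N k n : ℕ) : RatFunc Fq :=
  carlitzPi Fq n / carlitzPi Fq k * PowerSeries.coeff n (carlitzExpTail Fq N ^ k)

/-- The tail `log_C(z) − 𝓕_{N−1}(z) = Σ_{i=N}^∞ (−1)^i z^{r^i}/L_i` of the Carlitz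
logarithm. -/
def carlitzLogTail (N : ℕ) : PowerSeries (RatFunc Fq) :=
  PowerSeries.mk fun m => ∑ j ∈ Finset.range (m + 1),
    if m = rq Fq ^ (N + j) then (-1) ^ (N + j) * (carlitzL Fq (N + j))⁻¹ else 0

/-- The associated Stirling–Carlitz number of the first kind `{n brack k}_{C,≥N}`,
defined by `(log_C(z) − 𝓕_{N−1}(z))^k/Π(k) = Σ_n {n brack k}_{C,≥N} z^n/Π(n)`. -/
def stirling1C (N k n : ℕ) : RatFunc Fq :=
  carlitzPi Fq n / carlitzPi Fq k * PowerSeries.coeff n (carlitzLogTail Fq N ^ k)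


private lemma ringid {R : Type*} [CommRing R] (y : R) : ∀ n : ℕ,
    ∑ k ∈ Finset.range (n + 1), (-1 : R) ^ k * ((n + 1).choose (k + 1) : R) * (1 + y) ^ k
      = ∑ j ∈ Finset.range (n + 1), (-y) ^ j
  | 0 => by simp
  | (n+1) => by
    have hS1 : ∑ k ∈ Finset.range (n + 2), (-1 : R) ^ k * ((n + 1).choose k : R) * (1 + y) ^ k
        = (-y) ^ (n + 1) := by
      have h := add_pow (-(1+y)) (1 : R) (n + 1)
      have h2 : (-y : R) ^ (n+1) = (-(1+y) + 1) ^ (n+1) := by ring_nf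
      rw [h2, h]
      refine Finset.sum_congr rfl fun k _ => ?_
      rw [neg_pow (1 + y) k]
      ring
    calc ∑ k ∈ Finset.range (n + 2), (-1 : R) ^ k * ((n + 2).choose (k + 1) : R) * (1 + y) ^ k
        = ∑ k ∈ Finset.range (n + 2), ((-1 : R) ^ k * ((n + 1).choose k : R) * (1 + y) ^ k
            + (-1 : R) ^ k * ((n + 1).choose (k + 1) : R) * (1 + y) ^ k) := by
          refine Finset.sum_congr rfl fun k _ => ?_
          have : (n + 2).choose (k + 1) = (n + 1).choose k + (n + 1).choose (k + 1) :=
            Nat.choose_succ_succ (n + 1) k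
          rw [this]
          push_cast
          ring
      _ = (∑ k ∈ Finset.range (n + 2), (-1 : R) ^ k * ((n + 1).choose k : R) * (1 + y) ^ k)
            + ∑ k ∈ Finset.range (n + 2), (-1 : R) ^ k * ((n + 1).choose (k + 1) : R) * (1 + y) ^ k :=
          Finset.sum_add_distrib
      _ = (-y) ^ (n+1) + ∑ k ∈ Finset.range (n + 1), (-1 : R) ^ k * ((n + 1).choose (k + 1) : R) * (1 + y) ^ k := by
          rw [hS1, Finset.sum_range_succ]
          simp [Nat.choose_eq_zero_of_lt]
      _ = (-y) ^ (n+1) + ∑ j ∈ Finset.range (n + 1), (-y) ^ j := by rw [ringid y n]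
      _ = ∑ j ∈ Finset.range (n + 2), (-y) ^ j := by rw [Finset.sum_range_succ _ (n + 1), add_comm]

private lemma coeff_inv_eq {K : Type*} [Field K] (f : PowerSeries K)
    (h1 : PowerSeries.constantCoeff f = 1) (n : ℕ) (hn : 1 ≤ n) :
    PowerSeries.coeff n f⁻¹ =
      ∑ k ∈ Finset.range (n + 1), (-1 : K) ^ k * ((n + 1).choose (k + 1) : K) *
        PowerSeries.coeff n (f ^ k) := by
  have h0 : PowerSeries.constantCoeff f ≠ 0 := by rw [h1]; exact one_ne_zero
  set S : PowerSeries K := ∑ j ∈ Finset.range (n + 1), (1 - f) ^ j with hS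
  have hgeom := geom_sum_mul (1 - f) (n + 1)
  have hfS : f * S = 1 - (1 - f) ^ (n + 1) := by
    rw [hS]; linear_combination -hgeom
  have hinv : f⁻¹ * f = 1 := PowerSeries.inv_mul_cancel f h0
  have key : f⁻¹ = S + f⁻¹ * (1 - f) ^ (n + 1) := by
    calc f⁻¹ = f⁻¹ * 1 := (mul_one _).symm
      _ = f⁻¹ * (f * S + (1 - f) ^ (n + 1)) := by rw [hfS, sub_add_cancel]
      _ = S + f⁻¹ * (1 - f) ^ (n + 1) := by rw [mul_add, ← mul_assoc, hinv, one_mul]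
  have hzero : PowerSeries.coeff n (f⁻¹ * (1 - f) ^ (n + 1)) = 0 := by
    have hX : (PowerSeries.X : PowerSeries K) ∣ (1 - f) := by
      rw [PowerSeries.X_dvd_iff]; simp [h1]
    have hdvd : (PowerSeries.X : PowerSeries K) ^ (n + 1) ∣ f⁻¹ * (1 - f) ^ (n + 1) :=
      Dvd.dvd.mul_left (pow_dvd_pow_of_dvd hX (n + 1)) _
    exact PowerSeries.X_pow_dvd_iff.mp hdvd n (Nat.lt_succ_self n)
  have hr := ringid (R := PowerSeries K) (f - 1) n
  have h1f : (1 : PowerSeries K) + (f - 1) = f := by ring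
  have hnf : -(f - 1) = 1 - f := by ring
  rw [h1f, hnf] at hr
  have cast1 : ∀ k : ℕ, ((-1 : PowerSeries K) ^ k * (((n + 1).choose (k + 1) : ℕ) : PowerSeries K))
      = PowerSeries.C ((-1 : K) ^ k * (((n + 1).choose (k + 1) : ℕ) : K)) := by
    intro k
    rw [map_mul, map_pow, map_neg, map_one, map_natCast]
  calc PowerSeries.coeff n f⁻¹
      = PowerSeries.coeff n S + PowerSeries.coeff n (f⁻¹ * (1 - f) ^ (n + 1)) := by
        rw [← map_add, ← key]
    _ = PowerSeries.coeff n S := by rw [hzero, add_zero]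
    _ = PowerSeries.coeff n (∑ k ∈ Finset.range (n + 1),
          (-1 : PowerSeries K) ^ k * (((n + 1).choose (k + 1) : ℕ) : PowerSeries K) * f ^ k) := by
        rw [hS, ← hr]
    _ = ∑ k ∈ Finset.range (n + 1), (-1 : K) ^ k * ((n + 1).choose (k + 1) : K) *
          PowerSeries.coeff n (f ^ k) := by
        rw [map_sum]
        refine Finset.sum_congr rfl fun k _ => ?_
        rw [cast1, PowerSeries.coeff_C_mul]

section CarlitzAux

variable (Fq : Type*) [Field Fq] [Fintype Fq]

lemma two_le_rq : 2 ≤ rq Fq := Fintype.one_lt_card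

/-- exponent `e j = r^{N+j} - r^N` -/
def eE (N j : ℕ) : ℕ := rq Fq ^ (N + j) - rq Fq ^ N

lemma rN_le (N j : ℕ) : rq Fq ^ N ≤ rq Fq ^ (N + j) :=
  Nat.pow_le_pow_right (by have := two_le_rq Fq; omega) (Nat.le_add_right N j)

lemma eE_add (N j : ℕ) : eE Fq N j + rq Fq ^ N = rq Fq ^ (N + j) :=
  Nat.sub_add_cancel (rN_le Fq N j)

lemma eE_strictMono (N : ℕ) : StrictMono (eE Fq N) := by
  intro a b hab
  have h1 : rq Fq ^ (N + a) < rq Fq ^ (N + b) :=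
    Nat.pow_lt_pow_right (two_le_rq Fq) (by omega)
  exact Nat.sub_lt_sub_right (rN_le Fq N a) h1

lemma eE_injective (N : ℕ) : Function.Injective (eE Fq N) := (eE_strictMono Fq N).injective

lemma lt_pow_self_rq (m : ℕ) : m < rq Fq ^ m :=
  lt_of_lt_of_le (Nat.lt_two_pow_self (n := m)) (Nat.pow_le_pow_left (two_le_rq Fq) m)

lemma le_eE (N j : ℕ) : j ≤ eE Fq N j := by
  have h1 : rq Fq ^ N * (j + 1) ≤ rq Fq ^ N * rq Fq ^ j :=
    Nat.mul_le_mul_left _ (lt_pow_self_rq Fq j)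
  have h2 : rq Fq ^ N * rq Fq ^ j = rq Fq ^ (N + j) := (pow_add _ N j).symm
  have h3 : 1 ≤ rq Fq ^ N := Nat.one_le_pow _ _ (by have := two_le_rq Fq; omega)
  have h4 : j ≤ rq Fq ^ N * j := Nat.le_mul_of_pos_left _ h3
  have h5 : rq Fq ^ N * (j + 1) = rq Fq ^ N * j + rq Fq ^ N := by ring
  unfold eE
  omega

lemma carlitzBracket_ne_zero (i : ℕ) (hi : 1 ≤ i) : carlitzBracket Fq i ≠ 0 := by
  have h2 : 2 ≤ rq Fq ^ i := le_trans (two_le_rq Fq) (Nat.le_self_pow (by omega) _)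
  unfold carlitzBracket
  rw [← RatFunc.algebraMap_X (K := Fq), ← map_pow, ← map_sub]
  intro h
  have h0 : (Polynomial.X ^ rq Fq ^ i - Polynomial.X : Polynomial Fq) = 0 := by
    apply RatFunc.algebraMap_injective Fq
    rw [h, map_zero]
  have := congrArg (fun p => Polynomial.coeff p (rq Fq ^ i)) h0
  simp only [Polynomial.coeff_sub, Polynomial.coeff_X_pow, if_pos rfl, Polynomial.coeff_X,
    Polynomial.coeff_zero] at this
  rw [if_neg (by omega : ¬ (1 = rq Fq ^ i))] at this
  norm_num at this

lemma carlitzL_ne_zero (i : ℕ) : carlitzL Fq i ≠ 0 := by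
  induction i with
  | zero => exact one_ne_zero
  | succ i ih => exact mul_ne_zero (carlitzBracket_ne_zero Fq (i + 1) (by omega)) ih

/-- coefficient `a j = (-1)^j L_N / L_{N+j}` -/
def aC (N j : ℕ) : RatFunc Fq := (-1) ^ j * carlitzL Fq N / carlitzL Fq (N + j)

lemma coeff_cc_eE (N j : ℕ) :
    PowerSeries.coeff (eE Fq N j) (ccSeries Fq N) = aC Fq N j := by
  rw [ccSeries, PowerSeries.coeff_mk]
  rw [Finset.sum_eq_single_of_mem j (Finset.mem_range.mpr (Nat.lt_succ_of_le (le_eE Fq N j)))]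
  · exact if_pos rfl
  · intro b _ hb
    exact if_neg fun h => hb (eE_injective Fq N (h : eE Fq N j = eE Fq N b)).symm

lemma coeff_cc_not (N m : ℕ) (h : ∀ j, m ≠ eE Fq N j) :
    PowerSeries.coeff m (ccSeries Fq N) = 0 := by
  rw [ccSeries, PowerSeries.coeff_mk]
  exact Finset.sum_eq_zero fun j _ => if_neg (h j)

lemma constantCoeff_cc (N : ℕ) :
    PowerSeries.constantCoeff (ccSeries Fq N) = 1 := by
  have h0 : eE Fq N 0 = 0 := by simp [eE]
  have := coeff_cc_eE Fq N 0
  rw [h0] at this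
  rw [← PowerSeries.coeff_zero_eq_constantCoeff, this, aC]
  simp [div_self (carlitzL_ne_zero Fq N)]

/-- the finite index set of tuples -/
def tSet (N n k : ℕ) : Finset (Fin k → ℕ) :=
  (Fintype.piFinset fun _ : Fin k => Finset.range (n + k * rq Fq ^ N + 1)).filter
    (fun i => ∑ j, rq Fq ^ (N + i j) = n + k * rq Fq ^ N)

lemma mem_tSet_of (N n k : ℕ) (i : Fin k → ℕ)
    (hp : ∑ j, rq Fq ^ (N + i j) = n + k * rq Fq ^ N) : i ∈ tSet Fq N n k := by
  rw [tSet, Finset.mem_filter]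
  refine ⟨Fintype.mem_piFinset.mpr fun j => Finset.mem_range.mpr ?_, hp⟩
  have h1 : rq Fq ^ (N + i j) ≤ ∑ j', rq Fq ^ (N + i j') :=
    Finset.single_le_sum (f := fun j' => rq Fq ^ (N + i j')) (fun _ _ => Nat.zero_le _)
      (Finset.mem_univ j)
  have h2 : i j < rq Fq ^ (i j) := lt_pow_self_rq Fq (i j)
  have h3 : rq Fq ^ (i j) ≤ rq Fq ^ (N + i j) :=
    Nat.pow_le_pow_right (by have := two_le_rq Fq; omega) (by omega)
  omega

def tF (N k : ℕ) (v : Fin k → ℕ) : ℕ →₀ ℕ :=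
  Finsupp.onFinset (Finset.range k) (fun m => if h : m < k then eE Fq N (v ⟨m, h⟩) else 0)
    (fun m hm => Finset.mem_range.mpr (by by_contra hk; exact hm (dif_neg hk)))

lemma tF_apply_lt (N k : ℕ) (v : Fin k → ℕ) (m : ℕ) (h : m < k) :
    tF Fq N k v m = eE Fq N (v ⟨m, h⟩) := by
  show (if h : m < k then eE Fq N (v ⟨m, h⟩) else 0) = eE Fq N (v ⟨m, h⟩)
  rw [dif_pos h]

lemma tF_apply_fin (N k : ℕ) (v : Fin k → ℕ) (j : Fin k) : tF Fq N k v j = eE Fq N (v j) := by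
  show (if h : (j : ℕ) < k then eE Fq N (v ⟨j, h⟩) else 0) = eE Fq N (v j)
  rw [dif_pos j.isLt]

lemma tF_apply_ge (N k : ℕ) (v : Fin k → ℕ) (m : ℕ) (h : ¬ m < k) : tF Fq N k v m = 0 := by
  show (if h : m < k then eE Fq N (v ⟨m, h⟩) else 0) = 0
  rw [dif_neg h]

lemma sum_tF (N k : ℕ) (v : Fin k → ℕ) :
    ∑ m ∈ Finset.range k, tF Fq N k v m = ∑ j : Fin k, eE Fq N (v j) := by
  rw [Finset.sum_range (fun m => tF Fq N k v m)]
  exact Finset.sum_congr rfl fun j _ => tF_apply_fin Fq N k v j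

lemma sum_eE_eq (N n k : ℕ) (v : Fin k → ℕ)
    (hv : ∑ j, rq Fq ^ (N + v j) = n + k * rq Fq ^ N) :
    ∑ j : Fin k, eE Fq N (v j) = n := by
  have h1 : ∑ j : Fin k, (eE Fq N (v j) + rq Fq ^ N) = n + k * rq Fq ^ N := by
    rw [Finset.sum_congr rfl fun j _ => eE_add Fq N (v j)]
    exact hv
  have h2 : ∑ j : Fin k, (eE Fq N (v j) + rq Fq ^ N)
      = (∑ j : Fin k, eE Fq N (v j)) + k * rq Fq ^ N := by
    rw [Finset.sum_add_distrib, Finset.sum_const, Finset.card_univ, Fintype.card_fin,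
      smul_eq_mul]
  omega

lemma coeff_cc_pow (N n k : ℕ) :
    PowerSeries.coeff n ((ccSeries Fq N) ^ k) =
      ∑ i ∈ tSet Fq N n k, ∏ j, aC Fq N (i j) := by
  classical
  rw [PowerSeries.coeff_pow]
  rw [← Finset.sum_filter_of_ne
      (p := fun l : ℕ →₀ ℕ => ∀ m ∈ Finset.range k, ∃ j, l m = eE Fq N j)
      (fun l _ hne => by
        intro m hm
        by_contra hno
        push_neg at hno
        exact hne (Finset.prod_eq_zero hm (coeff_cc_not Fq N (l m) hno)))]
  refine (Finset.sum_nbij' (tF Fq N k)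
    (fun l : ℕ →₀ ℕ => fun j : Fin k => Function.invFun (eE Fq N) (l j))
    ?_ ?_ ?_ ?_ ?_).symm
  · -- forward: tSet → filter
    intro v hv
    rw [tSet, Finset.mem_filter] at hv
    have hv' : ∑ j, rq Fq ^ (N + v j) = n + k * rq Fq ^ N := hv.2
    rw [Finset.mem_filter]
    refine ⟨Finset.mem_finsuppAntidiag.mpr ⟨?_, Finsupp.support_onFinset_subset⟩, ?_⟩
    · rw [show (Finset.range k).sum (tF Fq N k v) = ∑ m ∈ Finset.range k, tF Fq N k v m from rfl,
        sum_tF]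
      exact sum_eE_eq Fq N n k v hv'
    · intro m hm
      have hmk := Finset.mem_range.mp hm
      exact ⟨v ⟨m, hmk⟩, tF_apply_lt Fq N k v m hmk⟩
  · -- backward: filter → tSet
    intro l hl
    obtain ⟨hA, hgood⟩ := Finset.mem_filter.mp hl
    obtain ⟨hsum, hsupp⟩ := Finset.mem_finsuppAntidiag.mp hA
    have hval : ∀ j : Fin k, eE Fq N (Function.invFun (eE Fq N) (l j)) = l j := by
      intro j
      obtain ⟨m, hm⟩ := hgood j (Finset.mem_range.mpr j.isLt)
      exact Function.invFun_eq ⟨m, hm.symm⟩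
    apply mem_tSet_of
    have h1 : ∀ j : Fin k, rq Fq ^ (N + Function.invFun (eE Fq N) (l j)) = l j + rq Fq ^ N := by
      intro j
      rw [← eE_add Fq N (Function.invFun (eE Fq N) (l j)), hval j]
    rw [Finset.sum_congr rfl fun j _ => h1 j, Finset.sum_add_distrib, Finset.sum_const,
      Finset.card_univ, Fintype.card_fin, smul_eq_mul]
    have h2 : ∑ j : Fin k, l j = n := by
      rw [← Finset.sum_range (fun m => l m)]
      exact hsum
    rw [h2]
  · -- left inverse
    intro v _
    funext j
    show Function.invFun (eE Fq N) (tF Fq N k v j) = v j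
    rw [tF_apply_fin]
    exact Function.leftInverse_invFun (eE_injective Fq N) (v j)
  · -- right inverse
    intro l hl
    obtain ⟨hA, hgood⟩ := Finset.mem_filter.mp hl
    obtain ⟨_, hsupp⟩ := Finset.mem_finsuppAntidiag.mp hA
    ext m
    by_cases hm : m < k
    · rw [tF_apply_lt Fq N k _ m hm]
      obtain ⟨j', hj'⟩ := hgood m (Finset.mem_range.mpr hm)
      exact Function.invFun_eq ⟨j', hj'.symm⟩
    · rw [tF_apply_ge Fq N k _ m hm]
      by_contra hc
      have : m ∈ l.support := Finsupp.mem_support_iff.mpr fun h => hc h.symm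
      exact hm (Finset.mem_range.mp (hsupp this))
  · -- values
    intro v _
    rw [Finset.prod_range
      (fun m => PowerSeries.coeff (tF Fq N k v m) (ccSeries Fq N))]
    refine Finset.prod_congr rfl fun j _ => ?_
    rw [tF_apply_fin, coeff_cc_eE]

lemma finsum_tSet (N n k : ℕ) :
    (∑ᶠ (i : Fin k → ℕ) (_ : ∑ j, rq Fq ^ (N + i j) = n + k * rq Fq ^ N),
        (-1 : RatFunc Fq) ^ (∑ j, i j) * ∏ j, (carlitzL Fq (N + i j))⁻¹)
      = ∑ i ∈ tSet Fq N n k,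
          (-1 : RatFunc Fq) ^ (∑ j, i j) * ∏ j, (carlitzL Fq (N + i j))⁻¹ := by
  classical
  apply finsum_cond_eq_sum_of_cond_iff
  intro x _
  constructor
  · exact fun hp => mem_tSet_of Fq N n k x hp
  · intro hx
    rw [tSet, Finset.mem_filter] at hx
    exact hx.2

lemma prod_aC (N k : ℕ) (i : Fin k → ℕ) :
    ∏ j, aC Fq N (i j) =
      (-1 : RatFunc Fq) ^ (∑ j, i j) * (carlitzL Fq N ^ k * ∏ j, (carlitzL Fq (N + i j))⁻¹) := by
  calc ∏ j, aC Fq N (i j)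
      = ∏ j, ((-1 : RatFunc Fq) ^ (i j) * (carlitzL Fq N * (carlitzL Fq (N + i j))⁻¹)) := by
        refine Finset.prod_congr rfl fun j _ => ?_
        rw [aC, div_eq_mul_inv, mul_assoc]
    _ = (∏ j, (-1 : RatFunc Fq) ^ (i j)) *
          ∏ j, (carlitzL Fq N * (carlitzL Fq (N + i j))⁻¹) := Finset.prod_mul_distrib
    _ = (-1 : RatFunc Fq) ^ (∑ j, i j) *
          (carlitzL Fq N ^ k * ∏ j, (carlitzL Fq (N + i j))⁻¹) := by
        rw [Finset.prod_pow_eq_pow_sum, Finset.prod_mul_distrib, Finset.prod_const,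
          Finset.card_univ, Fintype.card_fin]

end CarlitzAux


/-- binomial-coefficient formula for the truncated Cauchy–Carlitz
numbers. -/
theorem truncCC_explicit_binom (N n : ℕ) (hn : 1 ≤ n) :
    truncCC Fq N n =
      carlitzPi Fq n * ∑ k ∈ Finset.Icc 1 n,
        ((n + 1).choose (k + 1) : RatFunc Fq) * (-carlitzL Fq N) ^ k *
          ∑ᶠ (i : Fin k → ℕ) (_ : ∑ j, rq Fq ^ (N + i j) = n + k * rq Fq ^ N),
            (-1 : RatFunc Fq) ^ (∑ j, i j) * ∏ j, (carlitzL Fq (N + i j))⁻¹ := by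
  have hn0 : n ≠ 0 := by omega
  rw [truncCC]
  congr 1
  rw [coeff_inv_eq (ccSeries Fq N) (constantCoeff_cc Fq N) n hn]
  have hsplit : Finset.range (n + 1) = insert 0 (Finset.Icc 1 n) := by
    ext m
    simp only [Finset.mem_range, Finset.mem_insert, Finset.mem_Icc]
    omega
  rw [hsplit, Finset.sum_insert (by simp)]
  have h00 : (-1 : RatFunc Fq) ^ 0 * ((n + 1).choose (0 + 1) : RatFunc Fq) *
      PowerSeries.coeff n ((ccSeries Fq N) ^ 0) = 0 := by
    rw [pow_zero (ccSeries Fq N), PowerSeries.coeff_one]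
    simp [hn0]
  rw [h00, zero_add]
  refine Finset.sum_congr rfl fun k _ => ?_
  rw [coeff_cc_pow Fq N n k, finsum_tSet Fq N n k, Finset.mul_sum, Finset.mul_sum]
  refine Finset.sum_congr rfl fun i _ => ?_
  rw [prod_aC, neg_pow (carlitzL Fq N) k]
  ring

end
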